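/- arXiv:2212.07615 — 6 statements merged into one kernel-verified Lean document; each statement's English description precedes it below -/
import Mathlib

section
/- Let k = (x₁, x₂) : ℝ → ℝ² be a smooth curve which is a cusp at t₀ (right-left equivalent to t ↦ (t²/2, t³/3)). Then (x₁'(t₀), x₂'(t₀)) = (0,0) and the determinant Δ = x₁''(t₀)·x₂'''(t₀) − x₂''(t₀)·x₁'''(t₀) is nonzero. -/
open Real Filter

/-- Right-left equivalence of a plane curve germ at `t₀` to a model curve `c`
(via smooth local diffeomorphism germs of source and target sending the base
points to `0`). -/
def RLEquivTo (k : ℝ → ℝ × ℝ) (t₀ : ℝ) (c : ℝ → ℝ × ℝ) : Prop :=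
  ∃ (σ : ℝ → ℝ) (τ : ℝ × ℝ → ℝ × ℝ) (L : (ℝ × ℝ) ≃L[ℝ] (ℝ × ℝ)),
    ContDiffAt ℝ (⊤ : ℕ∞) σ t₀ ∧ σ t₀ = 0 ∧ deriv σ t₀ ≠ 0 ∧
    ContDiffAt ℝ (⊤ : ℕ∞) τ (k t₀) ∧ τ (k t₀) = (0, 0) ∧
    HasFDerivAt τ (L : (ℝ × ℝ) →L[ℝ] (ℝ × ℝ)) (k t₀) ∧
    ∀ᶠ t in nhds t₀, τ (k t) = c (σ t)

/-- `k` has a cusp at `t₀`: it is right-left equivalent to the standard cusp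
`t ↦ (t²/2, t³/3)`. -/
def IsCuspAt (k : ℝ → ℝ × ℝ) (t₀ : ℝ) : Prop :=
  RLEquivTo k t₀ (fun s => (s ^ 2 / 2, s ^ 3 / 3))

/-- The derivative of a `C^{m+1}` function at a point is `C^m` there. -/
theorem contDiffAt_deriv_aux {f : ℝ → ℝ} {x : ℝ} {n m : WithTop ℕ∞}
    (h : ContDiffAt ℝ n f x) (hm : m + 1 ≤ n) : ContDiffAt ℝ m (deriv f) x := by
  have h2 : ContDiffAt ℝ m (fun y => fderiv ℝ f y 1) x :=
    (h.fderiv_right hm).clm_apply contDiffAt_const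
  exact h2

/-- algebra endgame -/
theorem cusp_alg (L : (ℝ × ℝ) ≃L[ℝ] (ℝ × ℝ)) (u v : ℝ × ℝ) (a b : ℝ) (ha : a ≠ 0)
    (hu : L u = (a * a, 0)) (hv : L v = (3 * a * b, 2 * a ^ 3)) :
    u.1 * v.2 - u.2 * v.1 ≠ 0 := by
  intro hΔ
  have h1 : v.2 • u - u.2 • v = 0 := by
    have e : v.2 • u - u.2 • v = (v.2 * u.1 - u.2 * v.1, v.2 * u.2 - u.2 * v.2) := rfl
    rw [e, Prod.mk_eq_zero]
    constructor <;> nlinarith [hΔ]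
  have h2 : u.1 • v - v.1 • u = 0 := by
    have e : u.1 • v - v.1 • u = (u.1 * v.1 - v.1 * u.1, u.1 * v.2 - v.1 * u.2) := rfl
    rw [e, Prod.mk_eq_zero]
    constructor <;> nlinarith [hΔ]
  have h1' : v.2 • L u - u.2 • L v = 0 := by
    rw [← map_smul, ← map_smul, ← map_sub, h1, map_zero]
  have h2' : u.1 • L v - v.1 • L u = 0 := by
    rw [← map_smul, ← map_smul, ← map_sub, h2, map_zero]
  rw [hu, hv] at h1' h2'
  have e1 : v.2 • ((a*a : ℝ), (0:ℝ)) - u.2 • ((3*a*b : ℝ), (2*a^3 : ℝ))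
      = (v.2 * (a*a) - u.2 * (3*a*b), v.2 * 0 - u.2 * (2*a^3)) := rfl
  have e2 : u.1 • ((3*a*b : ℝ), (2*a^3 : ℝ)) - v.1 • ((a*a : ℝ), (0:ℝ))
      = (u.1 * (3*a*b) - v.1 * (a*a), u.1 * (2*a^3) - v.1 * 0) := rfl
  rw [e1, Prod.mk_eq_zero] at h1'
  rw [e2, Prod.mk_eq_zero] at h2'
  obtain ⟨h11, h12⟩ := h1'
  obtain ⟨h21, h22⟩ := h2'
  have h2a : (2 : ℝ) * a ^ 3 ≠ 0 := mul_ne_zero two_ne_zero (pow_ne_zero 3 ha)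
  have haa : a * a ≠ 0 := mul_ne_zero ha ha
  have hu2 : u.2 = 0 := by
    have h : u.2 * (2 * a ^ 3) = 0 := by linear_combination -h12
    exact (mul_eq_zero.mp h).resolve_right h2a
  have hu1 : u.1 = 0 := by
    have h : u.1 * (2 * a ^ 3) = 0 := by linear_combination h22
    exact (mul_eq_zero.mp h).resolve_right h2a
  have hv2 : v.2 = 0 := by
    have h : v.2 * (a * a) = 0 := by linear_combination h11 + 3 * a * b * hu2
    exact (mul_eq_zero.mp h).resolve_right haa
  have hv1 : v.1 = 0 := by
    have h : v.1 * (a * a) = 0 := by linear_combination -h21 + 3 * a * b * hu1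
    exact (mul_eq_zero.mp h).resolve_right haa
  have hu0 : u = 0 := by
    have : u = (u.1, u.2) := rfl
    rw [this, hu1, hu2]; rfl
  rw [hu0, map_zero] at hu
  have : a * a = 0 := (Prod.mk.injEq _ _ _ _).mp hu.symm |>.1
  exact ha (mul_self_eq_zero.mp this)

/-- If a smooth plane curve is a cusp at `t₀`, then its first derivative
vanishes there and the determinant `Δ = x₁''x₂''' − x₂''x₁'''` is nonzero. -/
theorem cusp_necessary (x₁ x₂ : ℝ → ℝ) (t₀ : ℝ)
    (hx₁ : ContDiff ℝ (⊤ : ℕ∞) x₁) (hx₂ : ContDiff ℝ (⊤ : ℕ∞) x₂)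
    (hcusp : IsCuspAt (fun t => (x₁ t, x₂ t)) t₀) :
    (deriv x₁ t₀ = 0 ∧ deriv x₂ t₀ = 0) ∧
    iteratedDeriv 2 x₁ t₀ * iteratedDeriv 3 x₂ t₀
      - iteratedDeriv 2 x₂ t₀ * iteratedDeriv 3 x₁ t₀ ≠ 0 := by
  obtain ⟨σ, τ, L, hσ, hσ0, ha, hτ, hτ0, hτL, heq⟩ := hcusp
  -- abbreviations
  set k : ℝ → ℝ × ℝ := (fun t => (x₁ t, x₂ t)) with hkdef
  set k1 : ℝ → ℝ × ℝ := fun t => (deriv x₁ t, deriv x₂ t) with hk1def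
  set k2 : ℝ → ℝ × ℝ := fun t => (deriv (deriv x₁) t, deriv (deriv x₂) t) with hk2def
  set k3 : ℝ → ℝ × ℝ :=
    fun t => (deriv (deriv (deriv x₁)) t, deriv (deriv (deriv x₂)) t) with hk3def
  -- differentiability of components
  have hD : ∀ f : ℝ → ℝ, ContDiff ℝ ((⊤ : ℕ∞) : WithTop ℕ∞) f →
      Differentiable ℝ f ∧ ContDiff ℝ ((⊤ : ℕ∞) : WithTop ℕ∞) (deriv f) :=
    fun f hf => contDiff_infty_iff_deriv.mp hf
  obtain ⟨hd₁, h₁'⟩ := hD x₁ (hx₁.of_le (by simp))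
  obtain ⟨hd₁', h₁''⟩ := hD _ h₁'
  obtain ⟨hd₁'', _⟩ := hD _ h₁''
  obtain ⟨hd₂, h₂'⟩ := hD x₂ (hx₂.of_le (by simp))
  obtain ⟨hd₂', h₂''⟩ := hD _ h₂'
  obtain ⟨hd₂'', _⟩ := hD _ h₂''
  have hk' : ∀ t, HasDerivAt k (k1 t) t :=
    fun t => (hd₁ t).hasDerivAt.prodMk (hd₂ t).hasDerivAt
  have hk1' : ∀ t, HasDerivAt k1 (k2 t) t :=
    fun t => (hd₁' t).hasDerivAt.prodMk (hd₂' t).hasDerivAt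
  have hk2' : ∀ t, HasDerivAt k2 (k3 t) t :=
    fun t => (hd₁'' t).hasDerivAt.prodMk (hd₂'' t).hasDerivAt
  have hkc : ContinuousAt k t₀ := (hk' t₀).continuousAt
  have h4ne : (4 : WithTop ℕ∞) ≠ ((⊤ : ℕ∞) : WithTop ℕ∞) := by norm_num
  -- smoothness neighborhoods for τ
  have hτ4 : ContDiffAt ℝ 4 τ (k t₀) := hτ.of_le (WithTop.coe_le_coe.mpr le_top)
  have hτev : ∀ᶠ t in nhds t₀, ContDiffAt ℝ 4 τ (k t) :=
    hkc.eventually (hτ4.eventually h4ne)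
  have hF1ev : ∀ᶠ t in nhds t₀, ContDiffAt ℝ 3 (fderiv ℝ τ) (k t) :=
    hτev.mono fun t ht => ht.fderiv_right (by norm_num)
  have hF2ev : ∀ᶠ t in nhds t₀, ContDiffAt ℝ 2 (fderiv ℝ (fderiv ℝ τ)) (k t) :=
    hF1ev.mono fun t ht => ht.fderiv_right (by norm_num)
  have hF1L : fderiv ℝ τ (k t₀) = (L : (ℝ × ℝ) →L[ℝ] (ℝ × ℝ)) := hτL.fderiv
  -- smoothness neighborhoods for σ
  have hσ4 : ContDiffAt ℝ 4 σ t₀ := hσ.of_le (WithTop.coe_le_coe.mpr le_top)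
  have hσev : ∀ᶠ y in nhds t₀, ContDiffAt ℝ 4 σ y := hσ4.eventually h4ne
  have hs1ev : ∀ᶠ y in nhds t₀, ContDiffAt ℝ 3 (deriv σ) y :=
    hσev.mono fun y hy => contDiffAt_deriv_aux hy (by norm_num)
  have hs2ev : ∀ᶠ y in nhds t₀, ContDiffAt ℝ 2 (deriv (deriv σ)) y :=
    hs1ev.mono fun y hy => contDiffAt_deriv_aux hy (by norm_num)
  -- the model side m and its derivatives
  set m : ℝ → ℝ × ℝ := fun t => (σ t ^ 2 / 2, σ t ^ 3 / 3) with hmdef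
  set m1 : ℝ → ℝ × ℝ := fun t => (σ t * deriv σ t, σ t * σ t * deriv σ t) with hm1def
  set m2 : ℝ → ℝ × ℝ := fun t =>
    (deriv σ t * deriv σ t + σ t * deriv (deriv σ) t,
      2 * σ t * deriv σ t * deriv σ t + σ t * σ t * deriv (deriv σ) t) with hm2def
  have hm1 : ∀ᶠ t in nhds t₀, HasDerivAt m (m1 t) t := by
    filter_upwards [hσev] with t ht
    have hd : HasDerivAt σ (deriv σ t) t :=
      (ht.differentiableAt (by norm_num)).hasDerivAt
    have h1 : HasDerivAt (fun u => σ u ^ 2 / 2) (σ t * deriv σ t) t := by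
      have h := (hd.fun_mul hd).div_const 2
      have e : (fun u => σ u * σ u / 2) = fun u => σ u ^ 2 / 2 := by
        funext u; ring
      rw [e] at h
      exact h.congr_deriv (by ring)
    have h2 : HasDerivAt (fun u => σ u ^ 3 / 3) (σ t * σ t * deriv σ t) t := by
      have h := ((hd.fun_mul hd).fun_mul hd).div_const 3
      have e : (fun u => σ u * σ u * σ u / 3) = fun u => σ u ^ 3 / 3 := by
        funext u; ring
      rw [e] at h
      exact h.congr_deriv (by ring)
    exact h1.prodMk h2
  have hm2 : ∀ᶠ t in nhds t₀, HasDerivAt m1 (m2 t) t := by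
    filter_upwards [hσev, hs1ev] with t ht ht1
    have hd : HasDerivAt σ (deriv σ t) t :=
      (ht.differentiableAt (by norm_num)).hasDerivAt
    have hd1 : HasDerivAt (deriv σ) (deriv (deriv σ) t) t :=
      (ht1.differentiableAt (by norm_num)).hasDerivAt
    have h1 : HasDerivAt (fun u => σ u * deriv σ u)
        (deriv σ t * deriv σ t + σ t * deriv (deriv σ) t) t := hd.fun_mul hd1
    have h2 : HasDerivAt (fun u => σ u * σ u * deriv σ u)
        (2 * σ t * deriv σ t * deriv σ t + σ t * σ t * deriv (deriv σ) t) t := by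
      have h := (hd.fun_mul hd).fun_mul hd1
      exact h.congr_deriv (by ring)
    exact h1.prodMk h2
  -- third derivative of m at t₀
  have hdσ : HasDerivAt σ (deriv σ t₀) t₀ :=
    ((hσev.self_of_nhds).differentiableAt (by norm_num)).hasDerivAt
  have hdσ1 : HasDerivAt (deriv σ) (deriv (deriv σ) t₀) t₀ :=
    ((hs1ev.self_of_nhds).differentiableAt (by norm_num)).hasDerivAt
  have hdσ2 : HasDerivAt (deriv (deriv σ)) (deriv (deriv (deriv σ)) t₀) t₀ :=
    ((hs2ev.self_of_nhds).differentiableAt (by norm_num)).hasDerivAt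
  set a : ℝ := deriv σ t₀ with hadef
  set b : ℝ := deriv (deriv σ) t₀ with hbdef
  have hm3 : HasDerivAt m2 (3 * a * b, 2 * a ^ 3) t₀ := by
    have h1 : HasDerivAt (fun u => deriv σ u * deriv σ u + σ u * deriv (deriv σ) u)
        (3 * a * b) t₀ := by
      have h := (hdσ1.fun_mul hdσ1).fun_add (hdσ.fun_mul hdσ2)
      exact h.congr_deriv (by rw [hσ0, hadef, hbdef]; ring)
    have h2 : HasDerivAt
        (fun u => 2 * σ u * deriv σ u * deriv σ u + σ u * σ u * deriv (deriv σ) u)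
        (2 * a ^ 3) t₀ := by
      have hc : HasDerivAt (fun u : ℝ => (2 : ℝ)) 0 t₀ := hasDerivAt_const t₀ 2
      have h := (((hc.fun_mul hdσ).fun_mul hdσ1).fun_mul hdσ1).fun_add ((hdσ.fun_mul hdσ).fun_mul hdσ2)
      exact h.congr_deriv (by rw [hσ0, hadef, hbdef]; ring)
    exact h1.prodMk h2
  -- the curve side p = τ ∘ k and its derivatives
  have hpeq : (fun t => τ (k t)) =ᶠ[nhds t₀] m := heq
  have hp1 : ∀ᶠ t in nhds t₀,
      HasDerivAt (fun u => τ (k u)) (fderiv ℝ τ (k t) (k1 t)) t := by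
    filter_upwards [hτev] with t ht
    exact ((ht.differentiableAt (by norm_num)).hasFDerivAt).comp_hasDerivAt t (hk' t)
  have hq1 : ∀ᶠ t in nhds t₀,
      HasDerivAt (fun u => fderiv ℝ τ (k u) (k1 u))
        (fderiv ℝ (fderiv ℝ τ) (k t) (k1 t) (k1 t) + fderiv ℝ τ (k t) (k2 t)) t := by
    filter_upwards [hF1ev] with t ht
    have hc : HasDerivAt (fun u => fderiv ℝ τ (k u))
        (fderiv ℝ (fderiv ℝ τ) (k t) (k1 t)) t :=
      ((ht.differentiableAt (by norm_num)).hasFDerivAt).comp_hasDerivAt t (hk' t)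
    exact hc.clm_apply (hk1' t)
  -- eventual equalities of derivatives
  have hEp1 : deriv (fun u => τ (k u)) =ᶠ[nhds t₀]
      (fun t => fderiv ℝ τ (k t) (k1 t)) := hp1.mono fun t h => h.deriv
  have hEm1 : deriv m =ᶠ[nhds t₀] m1 := hm1.mono fun t h => h.deriv
  -- first derivative: L (k1 t₀) = m1 t₀ = 0
  have hp0 : HasDerivAt (fun u => τ (k u)) ((L : (ℝ × ℝ) →L[ℝ] (ℝ × ℝ)) (k1 t₀)) t₀ :=
    hτL.comp_hasDerivAt t₀ (hk' t₀)
  have hstep1 : (L : (ℝ × ℝ) →L[ℝ] (ℝ × ℝ)) (k1 t₀) = m1 t₀ := by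
    rw [← hp0.deriv, hpeq.deriv_eq, (hm1.self_of_nhds).deriv]
  have hm1t0 : m1 t₀ = 0 := by
    rw [hm1def]; simp [hσ0]
  have hk10 : k1 t₀ = 0 := by
    have : (L : (ℝ × ℝ) →L[ℝ] (ℝ × ℝ)) (k1 t₀) = 0 := by rw [hstep1, hm1t0]
    have h2 : L (k1 t₀) = 0 := this
    exact L.map_eq_zero_iff.mp h2
  -- second derivative: L (k2 t₀) = m2 t₀ = (a*a, 0)
  have hstep2 : (L : (ℝ × ℝ) →L[ℝ] (ℝ × ℝ)) (k2 t₀) = m2 t₀ := by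
    have lhs : deriv (deriv (fun u => τ (k u))) t₀
        = fderiv ℝ (fderiv ℝ τ) (k t₀) (k1 t₀) (k1 t₀) + fderiv ℝ τ (k t₀) (k2 t₀) := by
      rw [hEp1.deriv_eq, (hq1.self_of_nhds).deriv]
    have rhs : deriv (deriv m) t₀ = m2 t₀ := by
      rw [hEm1.deriv_eq, (hm2.self_of_nhds).deriv]
    have heq2 : deriv (deriv (fun u => τ (k u))) t₀ = deriv (deriv m) t₀ :=
      (hpeq.deriv).deriv_eq
    rw [lhs, rhs] at heq2
    rw [hk10] at heq2
    simpa [hF1L] using heq2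
  have hm2t0 : m2 t₀ = (a * a, 0) := by
    rw [hm2def]; simp [hσ0, hadef]
  -- third derivative: L (k3 t₀) = (3ab, 2a³)
  have hq2 : HasDerivAt
      (fun t => fderiv ℝ (fderiv ℝ τ) (k t) (k1 t) (k1 t) + fderiv ℝ τ (k t) (k2 t))
      ((fderiv ℝ (fderiv ℝ (fderiv ℝ τ)) (k t₀) (k1 t₀) (k1 t₀)
          + fderiv ℝ (fderiv ℝ τ) (k t₀) (k2 t₀)) (k1 t₀)
        + fderiv ℝ (fderiv ℝ τ) (k t₀) (k1 t₀) (k2 t₀)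
        + (fderiv ℝ (fderiv ℝ τ) (k t₀) (k1 t₀) (k2 t₀)
          + fderiv ℝ τ (k t₀) (k3 t₀))) t₀ := by
    have hcc : HasDerivAt (fun u => fderiv ℝ (fderiv ℝ τ) (k u))
        (fderiv ℝ (fderiv ℝ (fderiv ℝ τ)) (k t₀) (k1 t₀)) t₀ :=
      (((hF2ev.self_of_nhds).differentiableAt (by norm_num)).hasFDerivAt).comp_hasDerivAt
        t₀ (hk' t₀)
    have hc2 : HasDerivAt (fun u => fderiv ℝ (fderiv ℝ τ) (k u) (k1 u))
        (fderiv ℝ (fderiv ℝ (fderiv ℝ τ)) (k t₀) (k1 t₀) (k1 t₀)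
          + fderiv ℝ (fderiv ℝ τ) (k t₀) (k2 t₀)) t₀ := hcc.clm_apply (hk1' t₀)
    have hterm1 := hc2.clm_apply (hk1' t₀)
    have hc1 : HasDerivAt (fun u => fderiv ℝ τ (k u))
        (fderiv ℝ (fderiv ℝ τ) (k t₀) (k1 t₀)) t₀ :=
      (((hF1ev.self_of_nhds).differentiableAt (by norm_num)).hasFDerivAt).comp_hasDerivAt
        t₀ (hk' t₀)
    have hterm2 := hc1.clm_apply (hk2' t₀)
    exact hterm1.add hterm2
  have hstep3 : (L : (ℝ × ℝ) →L[ℝ] (ℝ × ℝ)) (k3 t₀) = (3 * a * b, 2 * a ^ 3) := by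
    have hEq2 : deriv (deriv (fun u => τ (k u))) =ᶠ[nhds t₀]
        (fun t => fderiv ℝ (fderiv ℝ τ) (k t) (k1 t) (k1 t) + fderiv ℝ τ (k t) (k2 t)) :=
      (hEp1.deriv).trans (hq1.mono fun t h => h.deriv)
    have hEm2 : deriv (deriv m) =ᶠ[nhds t₀] m2 :=
      (hEm1.deriv).trans (hm2.mono fun t h => h.deriv)
    have h3 : deriv (deriv (deriv (fun u => τ (k u)))) t₀
        = deriv (deriv (deriv m)) t₀ := ((hpeq.deriv).deriv).deriv_eq
    rw [hEq2.deriv_eq, hq2.deriv, hEm2.deriv_eq, hm3.deriv, hk10] at h3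
    simpa [hF1L] using h3
  -- conclude
  have hk10' : deriv x₁ t₀ = 0 ∧ deriv x₂ t₀ = 0 := by
    have : (deriv x₁ t₀, deriv x₂ t₀) = ((0 : ℝ), (0 : ℝ)) := hk10
    exact ⟨congrArg Prod.fst this, congrArg Prod.snd this⟩
  refine ⟨hk10', ?_⟩
  have hit2 : ∀ f : ℝ → ℝ, iteratedDeriv 2 f = deriv (deriv f) := by
    intro f
    rw [show (2 : ℕ) = 1 + 1 from rfl, iteratedDeriv_succ,
      show (1 : ℕ) = 0 + 1 from rfl, iteratedDeriv_succ, iteratedDeriv_zero]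
  have hit3 : ∀ f : ℝ → ℝ, iteratedDeriv 3 f = deriv (deriv (deriv f)) := by
    intro f
    rw [show (3 : ℕ) = 2 + 1 from rfl, iteratedDeriv_succ, hit2]
  rw [hit2, hit2, hit3, hit3]
  have hu : L (k2 t₀) = (a * a, 0) := by rw [← hm2t0]; exact hstep2
  have hv : L (k3 t₀) = (3 * a * b, 2 * a ^ 3) := hstep3
  have := cusp_alg L (k2 t₀) (k3 t₀) a b ha hu hv
  simpa using this
end

section
/- The nonvanishing of the determinant Δ = x₁''·x₂''' − x₂''·x₁''' at t₀ for a non-immersive curve germ is invariant under right-left equivalence: if k and k̃ are smooth plane curve germs at t₀ and t̃₀ respectively with vanishing first derivatives there, and k̃ = τ ∘ k ∘ σ⁻¹ for smooth diffeomorphism germs σ of ℝ and τ of ℝ², then Δ(k)(t₀) ≠ 0 if and only if Δ(k̃)(t̃₀) ≠ 0. -/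
open Real Filter
open scoped ContDiff

/-- The determinant `Δ(k)(t) = x₁''(t)·x₂'''(t) − x₂''(t)·x₁'''(t)` of a plane
curve `k = (x₁, x₂)`. -/
noncomputable def cuspDet (x₁ x₂ : ℝ → ℝ) (t : ℝ) : ℝ :=
  iteratedDeriv 2 x₁ t * iteratedDeriv 3 x₂ t - iteratedDeriv 2 x₂ t * iteratedDeriv 3 x₁ t

lemma sigma_side {y σ : ℝ → ℝ} {t₀ : ℝ} (hy : ContDiff ℝ (⊤ : ℕ∞) y)
    (hσ : ContDiffAt ℝ (⊤ : ℕ∞) σ t₀) (hy' : deriv y (σ t₀) = 0) :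
    deriv (deriv (fun t => y (σ t))) t₀ =
      deriv (deriv y) (σ t₀) * (deriv σ t₀) ^ 2 ∧
    deriv (deriv (deriv (fun t => y (σ t)))) t₀ =
      deriv (deriv (deriv y)) (σ t₀) * (deriv σ t₀) ^ 3 +
        3 * deriv (deriv y) (σ t₀) * deriv σ t₀ * deriv (deriv σ) t₀ := by
  obtain ⟨U, hU, hσU⟩ := hσ.contDiffOn (m := 3) (WithTop.coe_le_coe.mpr le_top) (by simp)
  set V := interior U with hV
  have hVo : IsOpen V := isOpen_interior
  have ht₀ : t₀ ∈ V := mem_interior_iff_mem_nhds.2 hU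
  have hσV : ContDiffOn ℝ 3 σ V := hσU.mono interior_subset
  have hdσ : ContDiffOn ℝ 2 (deriv σ) V := hσV.deriv_of_isOpen hVo (by norm_num)
  have hddσ : ContDiffOn ℝ 1 (deriv (deriv σ)) V := hdσ.deriv_of_isOpen hVo (by norm_num)
  have hσd : ∀ t ∈ V, DifferentiableAt ℝ σ t := fun t ht =>
    (hσV.contDiffAt (hVo.mem_nhds ht)).differentiableAt (by norm_num)
  have hdσd : ∀ t ∈ V, DifferentiableAt ℝ (deriv σ) t := fun t ht =>
    (hdσ.contDiffAt (hVo.mem_nhds ht)).differentiableAt (by norm_num)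
  have hddσd : DifferentiableAt ℝ (deriv (deriv σ)) t₀ :=
    (hddσ.contDiffAt (hVo.mem_nhds ht₀)).differentiableAt (by norm_num)
  have hyI : ContDiff ℝ ∞ y := hy.of_le (by simp)
  have hdy : ContDiff ℝ ∞ (deriv y) := (contDiff_infty_iff_deriv.mp hyI).2
  have hddy : ContDiff ℝ ∞ (deriv (deriv y)) := (contDiff_infty_iff_deriv.mp hdy).2
  have hyd : Differentiable ℝ y := hyI.differentiable (by norm_num)
  have hdyd : Differentiable ℝ (deriv y) := hdy.differentiable (by norm_num)
  have hddyd : Differentiable ℝ (deriv (deriv y)) := hddy.differentiable (by norm_num)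
  have E1 : deriv (fun t => y (σ t)) =ᶠ[nhds t₀] fun t => deriv y (σ t) * deriv σ t := by
    filter_upwards [hVo.mem_nhds ht₀] with t ht
    exact deriv_comp t (hyd _) (hσd t ht)
  have H1 : ∀ t ∈ V, HasDerivAt (fun s => deriv y (σ s) * deriv σ s)
      (deriv (deriv y) (σ t) * deriv σ t * deriv σ t + deriv y (σ t) * deriv (deriv σ) t) t := by
    intro t ht
    have h₁ : HasDerivAt (fun s => deriv y (σ s)) (deriv (deriv y) (σ t) * deriv σ t) t :=
      HasDerivAt.comp t ((hdyd _).hasDerivAt) ((hσd t ht).hasDerivAt)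
    exact h₁.mul ((hdσd t ht).hasDerivAt)
  have E2 : deriv (deriv (fun t => y (σ t))) =ᶠ[nhds t₀] fun t =>
      deriv (deriv y) (σ t) * deriv σ t * deriv σ t + deriv y (σ t) * deriv (deriv σ) t := by
    refine E1.deriv.trans ?_
    filter_upwards [hVo.mem_nhds ht₀] with t ht
    exact (H1 t ht).deriv
  constructor
  · rw [E2.eq_of_nhds, hy']
    ring
  · have hA : HasDerivAt (fun t => deriv (deriv y) (σ t))
        (deriv (deriv (deriv y)) (σ t₀) * deriv σ t₀) t₀ :=
      HasDerivAt.comp t₀ ((hddyd _).hasDerivAt) ((hσd t₀ ht₀).hasDerivAt)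
    have hB : HasDerivAt (deriv σ) (deriv (deriv σ) t₀) t₀ := ((hdσd t₀ ht₀)).hasDerivAt
    have hC : HasDerivAt (fun t => deriv y (σ t)) (deriv (deriv y) (σ t₀) * deriv σ t₀) t₀ :=
      HasDerivAt.comp t₀ ((hdyd _).hasDerivAt) ((hσd t₀ ht₀).hasDerivAt)
    have hD : HasDerivAt (deriv (deriv σ)) (deriv (deriv (deriv σ)) t₀) t₀ := hddσd.hasDerivAt
    have htot : HasDerivAt (fun t => deriv (deriv y) (σ t) * deriv σ t * deriv σ t +
        deriv y (σ t) * deriv (deriv σ) t) _ t₀ := ((hA.mul hB).mul hB).add (hC.mul hD)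
    rw [E2.deriv.eq_of_nhds, htot.deriv, hy']
    simp only [Pi.mul_apply]
    ring

lemma tau_side {φ : ℝ × ℝ → ℝ} {x₁ x₂ : ℝ → ℝ} {t₀ : ℝ}
    (hx₁ : ContDiff ℝ (⊤ : ℕ∞) x₁) (hx₂ : ContDiff ℝ (⊤ : ℕ∞) x₂)
    (hφ : ContDiffAt ℝ (⊤ : ℕ∞) φ (x₁ t₀, x₂ t₀))
    (h1 : deriv x₁ t₀ = 0) (h2 : deriv x₂ t₀ = 0) :
    deriv (deriv (fun t => φ (x₁ t, x₂ t))) t₀ =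
      fderiv ℝ φ (x₁ t₀, x₂ t₀) (1, 0) * deriv (deriv x₁) t₀ +
      fderiv ℝ φ (x₁ t₀, x₂ t₀) (0, 1) * deriv (deriv x₂) t₀ ∧
    deriv (deriv (deriv (fun t => φ (x₁ t, x₂ t)))) t₀ =
      fderiv ℝ φ (x₁ t₀, x₂ t₀) (1, 0) * deriv (deriv (deriv x₁)) t₀ +
      fderiv ℝ φ (x₁ t₀, x₂ t₀) (0, 1) * deriv (deriv (deriv x₂)) t₀ := by
  obtain ⟨U, hU, hφU⟩ := hφ.contDiffOn (m := 4) (WithTop.coe_le_coe.mpr le_top) (by simp)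
  set V := interior U with hV
  have hVo : IsOpen V := isOpen_interior
  have hz₀ : (x₁ t₀, x₂ t₀) ∈ V := mem_interior_iff_mem_nhds.2 hU
  have hφV : ContDiffOn ℝ 4 φ V := hφU.mono interior_subset
  have hφdV : ContDiffOn ℝ 3 (fderiv ℝ φ) V := hφV.fderiv_of_isOpen hVo (by norm_num)
  -- the curve
  have hx₁I : ContDiff ℝ ∞ x₁ := hx₁.of_le (by simp)
  have hx₂I : ContDiff ℝ ∞ x₂ := hx₂.of_le (by simp)
  have hx₁d : Differentiable ℝ x₁ := hx₁I.differentiable (by norm_num)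
  have hx₂d : Differentiable ℝ x₂ := hx₂I.differentiable (by norm_num)
  have hdx₁ : ContDiff ℝ ∞ (deriv x₁) := (contDiff_infty_iff_deriv.mp hx₁I).2
  have hdx₂ : ContDiff ℝ ∞ (deriv x₂) := (contDiff_infty_iff_deriv.mp hx₂I).2
  have hdx₁d : Differentiable ℝ (deriv x₁) := hdx₁.differentiable (by norm_num)
  have hdx₂d : Differentiable ℝ (deriv x₂) := hdx₂.differentiable (by norm_num)
  have hddx₁d : Differentiable ℝ (deriv (deriv x₁)) :=
    ((contDiff_infty_iff_deriv.mp hdx₁).2).differentiable (by norm_num)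
  have hddx₂d : Differentiable ℝ (deriv (deriv x₂)) :=
    ((contDiff_infty_iff_deriv.mp hdx₂).2).differentiable (by norm_num)
  have hkC : ContDiff ℝ ∞ (fun t => (x₁ t, x₂ t)) := hx₁I.prodMk hx₂I
  have hkD : ∀ t, HasDerivAt (fun t => (x₁ t, x₂ t)) (deriv x₁ t, deriv x₂ t) t :=
    fun t => ((hx₁d t).hasDerivAt.prodMk ((hx₂d t).hasDerivAt))
  set W : Set ℝ := (fun t => (x₁ t, x₂ t)) ⁻¹' V with hW
  have hWo : IsOpen W := hVo.preimage (hkC.continuous)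
  have ht₀ : t₀ ∈ W := hz₀
  -- q functions
  set q₁ : ℝ → ℝ := fun t => fderiv ℝ φ (x₁ t, x₂ t) (1, 0) with hq₁def
  set q₂ : ℝ → ℝ := fun t => fderiv ℝ φ (x₁ t, x₂ t) (0, 1) with hq₂def
  have hqC : ∀ (v : ℝ × ℝ), ContDiffOn ℝ 3 (fun t => fderiv ℝ φ (x₁ t, x₂ t) v) W := by
    intro v
    have hcomp : ContDiffOn ℝ 3 (fun t => fderiv ℝ φ (x₁ t, x₂ t)) W :=
      hφdV.comp ((hkC.of_le (by norm_cast)).contDiffOn) (fun t ht => ht)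
    exact (ContinuousLinearMap.apply ℝ ℝ v).contDiff.comp_contDiffOn hcomp
  have hq₁C : ContDiffOn ℝ 3 q₁ W := hqC _
  have hq₂C : ContDiffOn ℝ 3 q₂ W := hqC _
  have hq₁d : ∀ t ∈ W, DifferentiableAt ℝ q₁ t := fun t ht =>
    (hq₁C.contDiffAt (hWo.mem_nhds ht)).differentiableAt (by norm_num)
  have hq₂d : ∀ t ∈ W, DifferentiableAt ℝ q₂ t := fun t ht =>
    (hq₂C.contDiffAt (hWo.mem_nhds ht)).differentiableAt (by norm_num)
  have hdq₁d : DifferentiableAt ℝ (deriv q₁) t₀ :=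
    (((hq₁C.deriv_of_isOpen (m := 2) hWo (by norm_num)).contDiffAt
      (hWo.mem_nhds ht₀)).differentiableAt (by norm_num))
  have hdq₂d : DifferentiableAt ℝ (deriv q₂) t₀ :=
    (((hq₂C.deriv_of_isOpen (m := 2) hWo (by norm_num)).contDiffAt
      (hWo.mem_nhds ht₀)).differentiableAt (by norm_num))
  -- deriv q at t₀ is 0
  have hq0 : ∀ (v : ℝ × ℝ), deriv (fun t => fderiv ℝ φ (x₁ t, x₂ t) v) t₀ = 0 := by
    intro v
    have hGd : DifferentiableAt ℝ (fun z => fderiv ℝ φ z v) (x₁ t₀, x₂ t₀) := by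
      have : DifferentiableAt ℝ (fderiv ℝ φ) (x₁ t₀, x₂ t₀) :=
        (hφdV.contDiffAt (hVo.mem_nhds hz₀)).differentiableAt (by norm_num)
      exact ((ContinuousLinearMap.apply ℝ ℝ v).differentiable.differentiableAt).comp _ this
    have h := hGd.hasFDerivAt.comp_hasDerivAt t₀ (hkD t₀)
    rw [h1, h2] at h
    rw [Prod.mk_zero_zero, map_zero] at h
    exact h.deriv
  have hq₁0 : deriv q₁ t₀ = 0 := hq0 _
  have hq₂0 : deriv q₂ t₀ = 0 := hq0 _
  -- expansion of fderiv applied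
  have expand : ∀ (M : (ℝ × ℝ) →L[ℝ] ℝ) (a b : ℝ), M (a, b) = a * M (1, 0) + b * M (0, 1) := by
    intro M a b
    have hab : ((a, b) : ℝ × ℝ) = a • ((1 : ℝ), (0 : ℝ)) + b • ((0 : ℝ), (1 : ℝ)) := by
      simp [Prod.ext_iff]
    rw [hab, map_add, map_smul, map_smul, smul_eq_mul, smul_eq_mul]
  -- first derivative eventually
  have hφdiff : ∀ t ∈ W, DifferentiableAt ℝ φ (x₁ t, x₂ t) := fun t ht =>
    (hφV.contDiffAt (hVo.mem_nhds ht)).differentiableAt (by norm_num)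
  have E1 : deriv (fun t => φ (x₁ t, x₂ t)) =ᶠ[nhds t₀]
      fun t => q₁ t * deriv x₁ t + q₂ t * deriv x₂ t := by
    filter_upwards [hWo.mem_nhds ht₀] with t ht
    have h' : HasDerivAt (fun t => φ (x₁ t, x₂ t))
        (fderiv ℝ φ (x₁ t, x₂ t) (deriv x₁ t, deriv x₂ t)) t :=
      (hφdiff t ht).hasFDerivAt.comp_hasDerivAt t (hkD t)
    rw [h'.deriv, expand]
    show _ = q₁ t * deriv x₁ t + q₂ t * deriv x₂ t
    simp [hq₁def, hq₂def]; ring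
  have E2 : deriv (deriv (fun t => φ (x₁ t, x₂ t))) =ᶠ[nhds t₀]
      fun t => (deriv q₁ t * deriv x₁ t + q₁ t * deriv (deriv x₁) t) +
        (deriv q₂ t * deriv x₂ t + q₂ t * deriv (deriv x₂) t) := by
    refine E1.deriv.trans ?_
    filter_upwards [hWo.mem_nhds ht₀] with t ht
    exact ((((hq₁d t ht).hasDerivAt.mul (hdx₁d t).hasDerivAt)).add
      (((hq₂d t ht).hasDerivAt.mul (hdx₂d t).hasDerivAt))).deriv
  constructor
  · rw [E2.eq_of_nhds, h1, h2, hq₁0, hq₂0]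
    show (0 * 0 + q₁ t₀ * deriv (deriv x₁) t₀) + (0 * 0 + q₂ t₀ * deriv (deriv x₂) t₀) = _
    simp [hq₁def, hq₂def]
  · have T1 : HasDerivAt (fun t => deriv q₁ t * deriv x₁ t + q₁ t * deriv (deriv x₁) t)
        ((deriv (deriv q₁) t₀ * deriv x₁ t₀ + deriv q₁ t₀ * deriv (deriv x₁) t₀) +
         (deriv q₁ t₀ * deriv (deriv x₁) t₀ + q₁ t₀ * deriv (deriv (deriv x₁)) t₀)) t₀ :=
      (hdq₁d.hasDerivAt.mul (hdx₁d t₀).hasDerivAt).add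
        ((hq₁d t₀ ht₀).hasDerivAt.mul (hddx₁d t₀).hasDerivAt)
    have T2 : HasDerivAt (fun t => deriv q₂ t * deriv x₂ t + q₂ t * deriv (deriv x₂) t)
        ((deriv (deriv q₂) t₀ * deriv x₂ t₀ + deriv q₂ t₀ * deriv (deriv x₂) t₀) +
         (deriv q₂ t₀ * deriv (deriv x₂) t₀ + q₂ t₀ * deriv (deriv (deriv x₂)) t₀)) t₀ :=
      (hdq₂d.hasDerivAt.mul (hdx₂d t₀).hasDerivAt).add
        ((hq₂d t₀ ht₀).hasDerivAt.mul (hddx₂d t₀).hasDerivAt)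
    have T3 : HasDerivAt (fun t => deriv q₁ t * deriv x₁ t + q₁ t * deriv (deriv x₁) t +
        (deriv q₂ t * deriv x₂ t + q₂ t * deriv (deriv x₂) t)) _ t₀ := T1.add T2
    rw [E2.deriv.eq_of_nhds, T3.deriv, h1, h2, hq₁0, hq₂0]
    simp [hq₁def, hq₂def]

lemma iteratedDeriv_two' (f : ℝ → ℝ) : iteratedDeriv 2 f = deriv (deriv f) := by
  rw [show (2:ℕ) = 1 + 1 from rfl, iteratedDeriv_succ, iteratedDeriv_one]

lemma iteratedDeriv_three' (f : ℝ → ℝ) : iteratedDeriv 3 f = deriv (deriv (deriv f)) := by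
  rw [show (3:ℕ) = 2 + 1 from rfl, iteratedDeriv_succ, iteratedDeriv_two']

lemma det_clm_ne_zero' (L : (ℝ × ℝ) ≃L[ℝ] (ℝ × ℝ)) :
    (L (1, 0)).1 * (L (0, 1)).2 - (L (0, 1)).1 * (L (1, 0)).2 ≠ 0 := by
  set a1 := (L (1, 0)).1 with ha1; set a2 := (L (1, 0)).2 with ha2
  set b1 := (L (0, 1)).1 with hb1; set b2 := (L (0, 1)).2 with hb2
  intro h
  have key : ∀ p q : ℝ, L (p, q) = (p * a1 + q * b1, p * a2 + q * b2) := by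
    intro p q
    have hpq : ((p, q) : ℝ × ℝ) = p • ((1 : ℝ), (0 : ℝ)) + q • ((0 : ℝ), (1 : ℝ)) := by
      simp [Prod.ext_iff]
    rw [hpq, map_add, map_smul, map_smul]
    simp [Prod.ext_iff, ha1, ha2, hb1, hb2]
  have hinj : ∀ p q : ℝ, L (p, q) = 0 → p = 0 ∧ q = 0 := by
    intro p q hpq
    have h0 : L (p, q) = L 0 := by simpa using hpq
    have := L.injective h0
    simpa [Prod.ext_iff] using this
  have h1 : L (b1, -a1) = 0 := by
    rw [key]
    have : b1 * a1 + -a1 * b1 = 0 := by ring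
    have : b1 * a2 + -a1 * b2 = 0 := by nlinarith [h]
    simp [Prod.ext_iff]
    constructor <;> nlinarith [h]
  have h2 : L (b2, -a2) = 0 := by
    rw [key]
    simp [Prod.ext_iff]
    constructor <;> nlinarith [h]
  obtain ⟨e11, e12⟩ := hinj _ _ h1
  obtain ⟨e21, e22⟩ := hinj _ _ h2
  have hz : L (1, 0) = 0 := by
    rw [key]
    have g1 : a1 = 0 := by linarith [e12]
    have g2 : a2 = 0 := by linarith [e22]
    rw [g1, g2]
    simp [Prod.ext_iff]
  obtain ⟨f1, f2⟩ := hinj _ _ hz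
  exact one_ne_zero f1



/-- Nonvanishing of `Δ` at a non-immersive point is invariant under right-left
equivalence: if `(y₁, y₂) ∘ σ = τ ∘ (x₁, x₂)` near `t₀` for local diffeomorphism
germs `σ` (of `ℝ`, sending `t₀` to `s₀`) and `τ` (of `ℝ²`), and both curves have
vanishing first derivatives at the respective points, then
`Δ(k)(t₀) ≠ 0 ↔ Δ(k̃)(s₀) ≠ 0`. -/
theorem cuspDet_ne_zero_invariant (x₁ x₂ y₁ y₂ : ℝ → ℝ) (t₀ s₀ : ℝ)
    (σ : ℝ → ℝ) (τ : ℝ × ℝ → ℝ × ℝ) (L : (ℝ × ℝ) ≃L[ℝ] (ℝ × ℝ))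
    (hx₁ : ContDiff ℝ (⊤ : ℕ∞) x₁) (hx₂ : ContDiff ℝ (⊤ : ℕ∞) x₂)
    (hy₁ : ContDiff ℝ (⊤ : ℕ∞) y₁) (hy₂ : ContDiff ℝ (⊤ : ℕ∞) y₂)
    (hσ : ContDiffAt ℝ (⊤ : ℕ∞) σ t₀) (hσ0 : σ t₀ = s₀) (hσ' : deriv σ t₀ ≠ 0)
    (hτ : ContDiffAt ℝ (⊤ : ℕ∞) τ (x₁ t₀, x₂ t₀))
    (hτ0 : τ (x₁ t₀, x₂ t₀) = (y₁ s₀, y₂ s₀))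
    (hτ' : HasFDerivAt τ (L : (ℝ × ℝ) →L[ℝ] (ℝ × ℝ)) (x₁ t₀, x₂ t₀))
    (heq : ∀ᶠ t in nhds t₀, (y₁ (σ t), y₂ (σ t)) = τ (x₁ t, x₂ t))
    (hk : deriv x₁ t₀ = 0 ∧ deriv x₂ t₀ = 0)
    (hk' : deriv y₁ s₀ = 0 ∧ deriv y₂ s₀ = 0) :
    cuspDet x₁ x₂ t₀ ≠ 0 ↔ cuspDet y₁ y₂ s₀ ≠ 0 := by
  obtain ⟨hk1, hk2⟩ := hk
  obtain ⟨hk'1, hk'2⟩ := hk'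
  have hφ₁ : ContDiffAt ℝ (⊤ : ℕ∞) (fun z => (τ z).1) (x₁ t₀, x₂ t₀) :=
    ContDiffAt.comp _ contDiff_fst.contDiffAt hτ
  have hφ₂ : ContDiffAt ℝ (⊤ : ℕ∞) (fun z => (τ z).2) (x₁ t₀, x₂ t₀) :=
    ContDiffAt.comp _ contDiff_snd.contDiffAt hτ
  obtain ⟨G21, G31⟩ := tau_side hx₁ hx₂ hφ₁ hk1 hk2
  obtain ⟨G22, G32⟩ := tau_side hx₁ hx₂ hφ₂ hk1 hk2
  have hf1 : fderiv ℝ (fun z => (τ z).1) (x₁ t₀, x₂ t₀) =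
      (ContinuousLinearMap.fst ℝ ℝ ℝ).comp (L : (ℝ × ℝ) →L[ℝ] (ℝ × ℝ)) := (hτ'.fst).fderiv
  have hf2 : fderiv ℝ (fun z => (τ z).2) (x₁ t₀, x₂ t₀) =
      (ContinuousLinearMap.snd ℝ ℝ ℝ).comp (L : (ℝ × ℝ) →L[ℝ] (ℝ × ℝ)) := (hτ'.snd).fderiv
  rw [hf1] at G21 G31
  rw [hf2] at G22 G32
  simp only [ContinuousLinearMap.coe_comp', Function.comp_apply,
    ContinuousLinearMap.coe_fst', ContinuousLinearMap.coe_snd',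
    ContinuousLinearEquiv.coe_coe] at G21 G31 G22 G32
  have hs₁ := sigma_side hy₁ hσ (by rw [hσ0]; exact hk'1)
  have hs₂ := sigma_side hy₂ hσ (by rw [hσ0]; exact hk'2)
  rw [hσ0] at hs₁ hs₂
  obtain ⟨S21, S31⟩ := hs₁
  obtain ⟨S22, S32⟩ := hs₂
  have heq₁ : (fun t => y₁ (σ t)) =ᶠ[nhds t₀] (fun t => (τ (x₁ t, x₂ t)).1) :=
    heq.mono fun t h => congrArg Prod.fst h
  have heq₂ : (fun t => y₂ (σ t)) =ᶠ[nhds t₀] (fun t => (τ (x₁ t, x₂ t)).2) :=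
    heq.mono fun t h => congrArg Prod.snd h
  have link21 := (heq₁.deriv.deriv).eq_of_nhds
  have link31 := (heq₁.deriv.deriv.deriv).eq_of_nhds
  have link22 := (heq₂.deriv.deriv).eq_of_nhds
  have link32 := (heq₂.deriv.deriv.deriv).eq_of_nhds
  set c := deriv σ t₀ with hc
  set d := deriv (deriv σ) t₀ with hd
  set a1 := (L (1, 0)).1 with ha1
  set a2 := (L (1, 0)).2 with ha2
  set b1 := (L (0, 1)).1 with hb1
  set b2 := (L (0, 1)).2 with hb2
  set X21 := deriv (deriv x₁) t₀ with hX21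
  set X22 := deriv (deriv x₂) t₀ with hX22
  set X31 := deriv (deriv (deriv x₁)) t₀ with hX31
  set X32 := deriv (deriv (deriv x₂)) t₀ with hX32
  set Y21 := deriv (deriv y₁) s₀ with hY21
  set Y22 := deriv (deriv y₂) s₀ with hY22
  set Y31 := deriv (deriv (deriv y₁)) s₀ with hY31
  set Y32 := deriv (deriv (deriv y₂)) s₀ with hY32
  have e1 : Y21 * c ^ 2 = a1 * X21 + b1 * X22 := by rw [← S21, link21]; exact G21
  have e2 : Y22 * c ^ 2 = a2 * X21 + b2 * X22 := by rw [← S22, link22]; exact G22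
  have e3 : Y31 * c ^ 3 + 3 * Y21 * c * d = a1 * X31 + b1 * X32 := by
    rw [← S31, link31]; exact G31
  have e4 : Y32 * c ^ 3 + 3 * Y22 * c * d = a2 * X31 + b2 * X32 := by
    rw [← S32, link32]; exact G32
  have key : (Y21 * Y32 - Y22 * Y31) * c ^ 5 =
      (a1 * b2 - b1 * a2) * (X21 * X32 - X22 * X31) := by
    linear_combination (Y32 * c ^ 3 + 3 * Y22 * c * d) * e1 + (a1 * X21 + b1 * X22) * e4 -
      (Y31 * c ^ 3 + 3 * Y21 * c * d) * e2 - (a2 * X21 + b2 * X22) * e3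
  have hdet : a1 * b2 - b1 * a2 ≠ 0 := det_clm_ne_zero' L
  have hc5 : c ^ 5 ≠ 0 := pow_ne_zero _ hσ'
  simp only [cuspDet, iteratedDeriv_two', iteratedDeriv_three']
  rw [← hX21, ← hX22, ← hX31, ← hX32, ← hY21, ← hY22, ← hY31, ← hY32]
  constructor
  · intro hX hY
    apply hX
    have h0 : (a1 * b2 - b1 * a2) * (X21 * X32 - X22 * X31) = 0 := by
      rw [← key, hY]; ring
    exact (mul_eq_zero.mp h0).resolve_left hdet
  · intro hY hX
    apply hY
    have h0 : (Y21 * Y32 - Y22 * Y31) * c ^ 5 = 0 := by rw [key, hX]; ring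
    exact (mul_eq_zero.mp h0).resolve_right hc5
end

section
/- Let (x₁, x₂, θ) be a solution of the flat sub-Riemannian geodesic equations x₁' = (p₁cos θ + p₂ sin θ)cos θ, x₂' = (p₁ cos θ + p₂ sin θ) sin θ, θ'' = (p₁ cos θ + p₂ sin θ)(p₁ sin θ − p₂ cos θ) with constants p₁, p₂. If at t₀ one has x₁'(t₀) = x₂'(t₀) = 0 (equivalently p₁ cos θ(t₀) + p₂ sin θ(t₀) = 0), then the determinant Δ = x₁''·x₂''' − x₂''·x₁''' evaluated at t₀ equals 2·θ'(t₀)³·(p₁² + p₂²). -/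
open Real

/-- For the flat sub-Riemannian geodesic equations with constants `p₁, p₂`, at a
point where `x₁' = x₂' = 0`, the determinant `Δ = x₁''x₂''' − x₂''x₁'''` equals
`2·θ'(t₀)³·(p₁² + p₂²)`. -/
theorem flat_geodesic_cusp_det (x₁ x₂ θ : ℝ → ℝ) (p₁ p₂ t₀ : ℝ)
    (hx₁ : ContDiff ℝ (⊤ : ℕ∞) x₁) (hx₂ : ContDiff ℝ (⊤ : ℕ∞) x₂) (hθ : ContDiff ℝ (⊤ : ℕ∞) θ)
    (hode₁ : ∀ t, deriv x₁ t =
      (p₁ * Real.cos (θ t) + p₂ * Real.sin (θ t)) * Real.cos (θ t))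
    (hode₂ : ∀ t, deriv x₂ t =
      (p₁ * Real.cos (θ t) + p₂ * Real.sin (θ t)) * Real.sin (θ t))
    (hodeθ : ∀ t, iteratedDeriv 2 θ t =
      (p₁ * Real.cos (θ t) + p₂ * Real.sin (θ t)) *
        (p₁ * Real.sin (θ t) - p₂ * Real.cos (θ t)))
    (h₁ : deriv x₁ t₀ = 0) (h₂ : deriv x₂ t₀ = 0) :
    iteratedDeriv 2 x₁ t₀ * iteratedDeriv 3 x₂ t₀
      - iteratedDeriv 2 x₂ t₀ * iteratedDeriv 3 x₁ t₀
      = 2 * (deriv θ t₀) ^ 3 * (p₁ ^ 2 + p₂ ^ 2) := by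
  have hθ1 : Differentiable ℝ θ := hθ.differentiable (by simp)
  have hθ' : ∀ t, HasDerivAt θ (deriv θ t) t := fun t => (hθ1 t).hasDerivAt
  have hθd1 : Differentiable ℝ (deriv θ) :=
    ((contDiff_infty_iff_deriv.mp (hθ.of_le (by simp))).2).differentiable (by simp)
  have hdθ' : HasDerivAt (deriv θ) (deriv (deriv θ) t₀) t₀ := (hθd1 t₀).hasDerivAt
  have hc : ∀ t, HasDerivAt (fun t => Real.cos (θ t))
      (-Real.sin (θ t) * deriv θ t) t :=
    fun t => (Real.hasDerivAt_cos (θ t)).comp t (hθ' t)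
  have hs : ∀ t, HasDerivAt (fun t => Real.sin (θ t))
      (Real.cos (θ t) * deriv θ t) t :=
    fun t => (Real.hasDerivAt_sin (θ t)).comp t (hθ' t)
  have hpyth := Real.sin_sq_add_cos_sq (θ t₀)
  -- u(t₀) = 0
  have e₁ : (p₁ * Real.cos (θ t₀) + p₂ * Real.sin (θ t₀)) * Real.cos (θ t₀) = 0 := by
    rw [← hode₁ t₀]; exact h₁
  have e₂ : (p₁ * Real.cos (θ t₀) + p₂ * Real.sin (θ t₀)) * Real.sin (θ t₀) = 0 := by
    rw [← hode₂ t₀]; exact h₂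
  have hu0 : p₁ * Real.cos (θ t₀) + p₂ * Real.sin (θ t₀) = 0 := by
    linear_combination Real.cos (θ t₀) * e₁ + Real.sin (θ t₀) * e₂
      - (p₁ * Real.cos (θ t₀) + p₂ * Real.sin (θ t₀)) * hpyth
  -- θ''(t₀) = 0
  have hD2 : deriv (deriv θ) t₀ = 0 := by
    have h := hodeθ t₀
    rw [show (2:ℕ) = 1+1 from rfl, iteratedDeriv_succ, iteratedDeriv_one] at h
    rw [h, hu0, zero_mul]
  -- second derivatives as explicit functions
  have hdx₁ : deriv x₁ = fun t =>
      (p₁ * Real.cos (θ t) + p₂ * Real.sin (θ t)) * Real.cos (θ t) := funext hode₁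
  have hdx₂ : deriv x₂ = fun t =>
      (p₁ * Real.cos (θ t) + p₂ * Real.sin (θ t)) * Real.sin (θ t) := funext hode₂
  have hx1'' : ∀ t, iteratedDeriv 2 x₁ t = deriv θ t *
      ((p₂ * Real.cos (θ t) - p₁ * Real.sin (θ t)) * Real.cos (θ t)
        - (p₁ * Real.cos (θ t) + p₂ * Real.sin (θ t)) * Real.sin (θ t)) := by
    intro t
    rw [show (2:ℕ) = 1+1 from rfl, iteratedDeriv_succ, iteratedDeriv_one, hdx₁]
    exact ((((hc t).const_mul p₁).add ((hs t).const_mul p₂)).mul (hc t)).deriv.trans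
      (by simp only [Pi.add_apply]; ring)
  have hx2'' : ∀ t, iteratedDeriv 2 x₂ t = deriv θ t *
      ((p₂ * Real.cos (θ t) - p₁ * Real.sin (θ t)) * Real.sin (θ t)
        + (p₁ * Real.cos (θ t) + p₂ * Real.sin (θ t)) * Real.cos (θ t)) := by
    intro t
    rw [show (2:ℕ) = 1+1 from rfl, iteratedDeriv_succ, iteratedDeriv_one, hdx₂]
    exact ((((hc t).const_mul p₁).add ((hs t).const_mul p₂)).mul (hs t)).deriv.trans
      (by simp only [Pi.add_apply]; ring)
  -- inner factor derivatives at t₀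
  have hW₁ : HasDerivAt (fun t =>
      (p₂ * Real.cos (θ t) - p₁ * Real.sin (θ t)) * Real.cos (θ t)
        - (p₁ * Real.cos (θ t) + p₂ * Real.sin (θ t)) * Real.sin (θ t))
      (-2 * deriv θ t₀ *
        ((p₁ * Real.cos (θ t₀) + p₂ * Real.sin (θ t₀)) * Real.cos (θ t₀)
          + (p₂ * Real.cos (θ t₀) - p₁ * Real.sin (θ t₀)) * Real.sin (θ t₀))) t₀ := by
    have h := ((((hc t₀).const_mul p₂).sub ((hs t₀).const_mul p₁)).mul (hc t₀)).sub
      ((((hc t₀).const_mul p₁).add ((hs t₀).const_mul p₂)).mul (hs t₀))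
    refine h.congr_deriv ?_
    simp only [Pi.add_apply, Pi.sub_apply]
    ring
  have hW₂ : HasDerivAt (fun t =>
      (p₂ * Real.cos (θ t) - p₁ * Real.sin (θ t)) * Real.sin (θ t)
        + (p₁ * Real.cos (θ t) + p₂ * Real.sin (θ t)) * Real.cos (θ t))
      (2 * deriv θ t₀ *
        ((p₂ * Real.cos (θ t₀) - p₁ * Real.sin (θ t₀)) * Real.cos (θ t₀)
          - (p₁ * Real.cos (θ t₀) + p₂ * Real.sin (θ t₀)) * Real.sin (θ t₀))) t₀ := by
    have h := ((((hc t₀).const_mul p₂).sub ((hs t₀).const_mul p₁)).mul (hs t₀)).add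
      ((((hc t₀).const_mul p₁).add ((hs t₀).const_mul p₂)).mul (hc t₀))
    refine h.congr_deriv ?_
    simp only [Pi.add_apply, Pi.sub_apply]
    ring
  -- third derivatives at t₀
  have hx1''' : iteratedDeriv 3 x₁ t₀ =
      deriv (deriv θ) t₀ *
        ((p₂ * Real.cos (θ t₀) - p₁ * Real.sin (θ t₀)) * Real.cos (θ t₀)
          - (p₁ * Real.cos (θ t₀) + p₂ * Real.sin (θ t₀)) * Real.sin (θ t₀))
      + deriv θ t₀ * (-2 * deriv θ t₀ *
        ((p₁ * Real.cos (θ t₀) + p₂ * Real.sin (θ t₀)) * Real.cos (θ t₀)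
          + (p₂ * Real.cos (θ t₀) - p₁ * Real.sin (θ t₀)) * Real.sin (θ t₀))) := by
    rw [show (3:ℕ) = 2+1 from rfl, iteratedDeriv_succ, funext hx1'']
    exact (hdθ'.mul hW₁).deriv
  have hx2''' : iteratedDeriv 3 x₂ t₀ =
      deriv (deriv θ) t₀ *
        ((p₂ * Real.cos (θ t₀) - p₁ * Real.sin (θ t₀)) * Real.sin (θ t₀)
          + (p₁ * Real.cos (θ t₀) + p₂ * Real.sin (θ t₀)) * Real.cos (θ t₀))
      + deriv θ t₀ * (2 * deriv θ t₀ *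
        ((p₂ * Real.cos (θ t₀) - p₁ * Real.sin (θ t₀)) * Real.cos (θ t₀)
          - (p₁ * Real.cos (θ t₀) + p₂ * Real.sin (θ t₀)) * Real.sin (θ t₀))) := by
    rw [show (3:ℕ) = 2+1 from rfl, iteratedDeriv_succ, funext hx2'']
    exact (hdθ'.mul hW₂).deriv
  rw [hx1'' t₀, hx2'' t₀, hx1''', hx2''', hD2]
  linear_combination (2 * (deriv θ t₀)^3 * (p₁^2 + p₂^2) *
    (Real.sin (θ t₀)^2 + Real.cos (θ t₀)^2 + 1)) * hpyth
end

section
/- Let (x₁, x₂, θ) solve the flat sub-Riemannian geodesic equations with constants p₁, p₂, and set f(t) = −x₁(t) sin θ(t) + x₂(t) cos θ(t), e(t) = θ(t). If θ'(t₀) = 0, then f'(t₀) = 0 and the determinant f''(t₀)·e'''(t₀) − e''(t₀)·f'''(t₀) equals ±2θ''(t₀)²(p₁ cos θ(t₀) + p₂ sin θ(t₀)). -/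
open Real
open scoped ContDiff

/-- For the flat sub-Riemannian geodesic equations, consider the projection
`(f, e) = (−x₁ sin θ + x₂ cos θ, θ)` to the space of oriented lines. If
`θ'(t₀) = 0`, then `f'(t₀) = 0` and the determinant `f''e''' − e''f'''` at `t₀`
equals `±2·θ''(t₀)²·(p₁ cos θ(t₀) + p₂ sin θ(t₀))`. -/
theorem flat_geodesic_dual_det (x₁ x₂ θ f e : ℝ → ℝ) (p₁ p₂ t₀ : ℝ)
    (hx₁ : ContDiff ℝ (⊤ : ℕ∞) x₁) (hx₂ : ContDiff ℝ (⊤ : ℕ∞) x₂) (hθ : ContDiff ℝ (⊤ : ℕ∞) θ)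
    (hode₁ : ∀ t, deriv x₁ t =
      (p₁ * Real.cos (θ t) + p₂ * Real.sin (θ t)) * Real.cos (θ t))
    (hode₂ : ∀ t, deriv x₂ t =
      (p₁ * Real.cos (θ t) + p₂ * Real.sin (θ t)) * Real.sin (θ t))
    (hodeθ : ∀ t, iteratedDeriv 2 θ t =
      (p₁ * Real.cos (θ t) + p₂ * Real.sin (θ t)) *
        (p₁ * Real.sin (θ t) - p₂ * Real.cos (θ t)))
    (hf : ∀ t, f t = -(x₁ t) * Real.sin (θ t) + x₂ t * Real.cos (θ t))
    (he : ∀ t, e t = θ t)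
    (h0 : deriv θ t₀ = 0) :
    deriv f t₀ = 0 ∧
    (iteratedDeriv 2 f t₀ * iteratedDeriv 3 e t₀
        - iteratedDeriv 2 e t₀ * iteratedDeriv 3 f t₀
      = 2 * (iteratedDeriv 2 θ t₀) ^ 2 *
          (p₁ * Real.cos (θ t₀) + p₂ * Real.sin (θ t₀)) ∨
     iteratedDeriv 2 f t₀ * iteratedDeriv 3 e t₀
        - iteratedDeriv 2 e t₀ * iteratedDeriv 3 f t₀
      = -(2 * (iteratedDeriv 2 θ t₀) ^ 2 *
          (p₁ * Real.cos (θ t₀) + p₂ * Real.sin (θ t₀)))) := by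
  -- differentiability facts
  have hθd : Differentiable ℝ θ := hθ.differentiable (by simp)
  have hθi : ContDiff ℝ ∞ θ := hθ.of_le (by simp)
  have hθ1 : ContDiff ℝ ∞ (deriv θ) := (contDiff_infty_iff_deriv.mp hθi).2
  have hθ2 : ContDiff ℝ ∞ (deriv (deriv θ)) := (contDiff_infty_iff_deriv.mp hθ1).2
  have Hθ : ∀ t, HasDerivAt θ (deriv θ t) t := fun t => (hθd t).hasDerivAt
  have Hθ' : ∀ t, HasDerivAt (deriv θ) (deriv (deriv θ) t) t :=
    fun t => ((hθ1.differentiable (by simp)) t).hasDerivAt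
  have Hθ'' : ∀ t, HasDerivAt (deriv (deriv θ)) (deriv (deriv (deriv θ)) t) t :=
    fun t => ((hθ2.differentiable (by simp)) t).hasDerivAt
  have Hx₁ : ∀ t, HasDerivAt x₁ (deriv x₁ t) t :=
    fun t => ((hx₁.differentiable (by simp)) t).hasDerivAt
  have Hx₂ : ∀ t, HasDerivAt x₂ (deriv x₂ t) t :=
    fun t => ((hx₂.differentiable (by simp)) t).hasDerivAt
  have Hsin : ∀ t, HasDerivAt (fun t => Real.sin (θ t)) (Real.cos (θ t) * deriv θ t) t :=
    fun t => (Real.hasDerivAt_sin (θ t)).comp t (Hθ t)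
  have Hcos : ∀ t, HasDerivAt (fun t => Real.cos (θ t)) (-Real.sin (θ t) * deriv θ t) t :=
    fun t => (Real.hasDerivAt_cos (θ t)).comp t (Hθ t)
  -- the function g and its derivative
  have Hg : ∀ t, HasDerivAt (fun t => x₁ t * Real.cos (θ t) + x₂ t * Real.sin (θ t))
      ((p₁ * Real.cos (θ t) + p₂ * Real.sin (θ t))
        + deriv θ t * (-(x₁ t) * Real.sin (θ t) + x₂ t * Real.cos (θ t))) t := by
    intro t
    have h1 : HasDerivAt (fun t => x₁ t * Real.cos (θ t) + x₂ t * Real.sin (θ t)) _ t :=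
      ((Hx₁ t).mul (Hcos t)).add ((Hx₂ t).mul (Hsin t))
    convert h1 using 1
    rw [hode₁, hode₂]
    linear_combination (-(p₁ * Real.cos (θ t) + p₂ * Real.sin (θ t))) * Real.sin_sq_add_cos_sq (θ t)
  -- F = the explicit formula for f, with its derivative
  have HF : ∀ t, HasDerivAt (fun t => -(x₁ t) * Real.sin (θ t) + x₂ t * Real.cos (θ t))
      (-(deriv θ t) * (x₁ t * Real.cos (θ t) + x₂ t * Real.sin (θ t))) t := by
    intro t
    have h1 : HasDerivAt (fun t => -(x₁ t) * Real.sin (θ t) + x₂ t * Real.cos (θ t)) _ t :=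
      (((Hx₁ t).neg).mul (Hsin t)).add ((Hx₂ t).mul (Hcos t))
    convert h1 using 1
    rw [hode₁, hode₂, Pi.neg_apply]; ring
  have hfeq : f = fun t => -(x₁ t) * Real.sin (θ t) + x₂ t * Real.cos (θ t) := funext hf
  -- first derivative of f
  have hf' : ∀ t, deriv f t
      = -(deriv θ t) * (x₁ t * Real.cos (θ t) + x₂ t * Real.sin (θ t)) := by
    intro t; rw [hfeq]; exact (HF t).deriv
  have hf'fun : deriv f
      = fun t => -(deriv θ t) * (x₁ t * Real.cos (θ t) + x₂ t * Real.sin (θ t)) :=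
    funext hf'
  have hA : ∀ t, HasDerivAt (fun t => p₁ * Real.cos (θ t) + p₂ * Real.sin (θ t))
      (p₁ * (-Real.sin (θ t) * deriv θ t) + p₂ * (Real.cos (θ t) * deriv θ t)) t :=
    fun t => ((Hcos t).const_mul p₁).add ((Hsin t).const_mul p₂)
  -- second derivative of f
  have hf'' : ∀ t, deriv (deriv f) t
      = -(deriv (deriv θ) t) * (x₁ t * Real.cos (θ t) + x₂ t * Real.sin (θ t))
        - deriv θ t * ((p₁ * Real.cos (θ t) + p₂ * Real.sin (θ t))
            + deriv θ t * (-(x₁ t) * Real.sin (θ t) + x₂ t * Real.cos (θ t))) := by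
    intro t
    rw [hf'fun]
    have h1 := (show HasDerivAt (fun t => -(deriv θ t) * (x₁ t * Real.cos (θ t) + x₂ t * Real.sin (θ t))) _ t from
      (Hθ' t).neg.mul (Hg t)).deriv
    rw [h1, Pi.neg_apply]; ring
  have hf''fun : deriv (deriv f)
      = fun t => -(deriv (deriv θ) t) * (x₁ t * Real.cos (θ t) + x₂ t * Real.sin (θ t))
        - deriv θ t * ((p₁ * Real.cos (θ t) + p₂ * Real.sin (θ t))
            + deriv θ t * (-(x₁ t) * Real.sin (θ t) + x₂ t * Real.cos (θ t))) :=
    funext hf''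
  -- third derivative of f at t₀
  have hf''' : deriv (deriv (deriv f)) t₀
      = -(deriv (deriv (deriv θ)) t₀)
            * (x₁ t₀ * Real.cos (θ t₀) + x₂ t₀ * Real.sin (θ t₀))
        - 2 * deriv (deriv θ) t₀ * (p₁ * Real.cos (θ t₀) + p₂ * Real.sin (θ t₀)) := by
    rw [hf''fun]
    have h1 := (show HasDerivAt (fun t => -(deriv (deriv θ) t) * (x₁ t * Real.cos (θ t) + x₂ t * Real.sin (θ t))
        - deriv θ t * ((p₁ * Real.cos (θ t) + p₂ * Real.sin (θ t))
            + deriv θ t * (-(x₁ t) * Real.sin (θ t) + x₂ t * Real.cos (θ t)))) _ t₀ from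
      ((Hθ'' t₀).neg.mul (Hg t₀)).sub
      ((Hθ' t₀).mul ((hA t₀).add ((Hθ' t₀).mul (HF t₀))))).deriv
    rw [h1, h0, Pi.neg_apply]; ring
  -- iterated derivatives in terms of deriv
  have i2 : ∀ u : ℝ → ℝ, iteratedDeriv 2 u = deriv (deriv u) := by
    intro u; simp [iteratedDeriv_succ, iteratedDeriv_one]
  have i3 : ∀ u : ℝ → ℝ, iteratedDeriv 3 u = deriv (deriv (deriv u)) := by
    intro u; simp [iteratedDeriv_succ, iteratedDeriv_one]
  have heeq : e = θ := funext he
  have hθ2' : deriv (deriv θ) t₀ = iteratedDeriv 2 θ t₀ := by rw [i2]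
  constructor
  · rw [hf' t₀, h0]; ring
  · left
    rw [heeq, i2 f, i3 f, i3 θ, hf''', hf'' t₀, h0, hθ2', i2 θ]
    ring
end

section
/- In the flat geodesic equations, setting Θ = 2θ + ρ where r = (p₁² + p₂²)/2, cos ρ = −(p₁² − p₂²)/(2r), sin ρ = p₁p₂/r (assuming (p₁,p₂) ≠ (0,0)), and ω = √(2r), the function Θ satisfies the simple pendulum equation Θ'' = −ω² sin Θ. -/
/-!
By the double-angle formulas the force `(p₁ cos θ + p₂ sin θ)(p₁ sin θ − p₂ cos θ)` equals
`(p₁² − p₂²)/2 · sin 2θ − p₁p₂ cos 2θ = −r sin (2θ + ρ)`, so `Θ'' = 2θ'' = −2r sin Θ = −ω² sin Θ`.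
-/

open Real

theorem flat_geodesic_force_eq_neg_mul_sin {p₁ p₂ r ρ : ℝ} (hr : r ≠ 0)
    (hcos : cos ρ = -(p₁ ^ 2 - p₂ ^ 2) / (2 * r)) (hsin : sin ρ = p₁ * p₂ / r) (x : ℝ) :
    (p₁ * cos x + p₂ * sin x) * (p₁ * sin x - p₂ * cos x) = -r * sin (2 * x + ρ) := by
  rw [sin_add, hcos, hsin, sin_two_mul, cos_two_mul]
  field_simp
  linear_combination (p₁ * p₂) * sin_sq_add_cos_sq x

theorem flat_geodesic_angle_pendulum_general (θ : ℝ → ℝ) (p₁ p₂ r ρ ω : ℝ)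
    (hode : ∀ t, iteratedDeriv 2 θ t =
      (p₁ * Real.cos (θ t) + p₂ * Real.sin (θ t)) *
        (p₁ * Real.sin (θ t) - p₂ * Real.cos (θ t)))
    (hp : (p₁, p₂) ≠ (0, 0))
    (hr : r = (p₁ ^ 2 + p₂ ^ 2) / 2)
    (hcos : Real.cos ρ = -(p₁ ^ 2 - p₂ ^ 2) / (2 * r))
    (hsin : Real.sin ρ = p₁ * p₂ / r)
    (hω : ω = Real.sqrt (2 * r)) :
    ∀ t, iteratedDeriv 2 (fun s => 2 * θ s + ρ) t
      = -ω ^ 2 * Real.sin (2 * θ t + ρ) := by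
  have hr_pos : 0 < r := by
    rw [Ne, Prod.mk.injEq, not_and_or] at hp
    rcases hp with h | h <;> rw [hr] <;> positivity
  have hω_sq : ω ^ 2 = 2 * r := by rw [hω, sq_sqrt (by positivity)]
  intro t
  calc iteratedDeriv 2 (fun s => 2 * θ s + ρ) t
      = 2 * iteratedDeriv 2 θ t := by
        simp only [add_comm _ ρ, iteratedDeriv_const_add two_pos, iteratedDeriv_const_mul_field]
    _ = -ω ^ 2 * sin (2 * θ t + ρ) := by
        rw [hode, flat_geodesic_force_eq_neg_mul_sin hr_pos.ne' hcos hsin, hω_sq]; ring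

/-- With `Θ = 2θ + ρ`, `r = (p₁² + p₂²)/2`, `cos ρ = −(p₁² − p₂²)/(2r)`,
`sin ρ = p₁p₂/r`, `ω = √(2r)`, a solution of the flat geodesic angular equation
satisfies the simple pendulum equation `Θ'' = −ω² sin Θ`. -/
theorem flat_geodesic_angle_pendulum (θ : ℝ → ℝ) (p₁ p₂ r ρ ω : ℝ)
    (hθ : ContDiff ℝ ⊤ θ)
    (hode : ∀ t, iteratedDeriv 2 θ t =
      (p₁ * Real.cos (θ t) + p₂ * Real.sin (θ t)) *
        (p₁ * Real.sin (θ t) - p₂ * Real.cos (θ t)))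
    (hp : (p₁, p₂) ≠ (0, 0))
    (hr : r = (p₁ ^ 2 + p₂ ^ 2) / 2)
    (hcos : Real.cos ρ = -(p₁ ^ 2 - p₂ ^ 2) / (2 * r))
    (hsin : Real.sin ρ = p₁ * p₂ / r)
    (hω : ω = Real.sqrt (2 * r)) :
    ∀ t, iteratedDeriv 2 (fun s => 2 * θ s + ρ) t
      = -ω ^ 2 * Real.sin (2 * θ t + ρ) :=
  flat_geodesic_angle_pendulum_general θ p₁ p₂ r ρ ω hode hp hr hcos hsin hω
end

section
/- Let A(t) = (k p₁ + ℓ p₂) cos θ + (m p₁ + n p₂) sin θ along a curve where at t₀: A(t₀) = 0, the derivatives of k, ℓ, m, n along the curve vanish at t₀, and p₁'(t₀) = p₂'(t₀) = 0. Define x₁' = (∂A/∂p₁)·A and x₂' = (∂A/∂p₂)·A (partial derivatives in p₁, p₂ treating the other variables as the given functions of t). Then the determinant Δ = x₁''x₂''' − x₂''x₁''' at t₀ equals 2·B(t₀)²·(kn − ℓm)(t₀)·θ'(t₀)³, where B = −(kp₁ + ℓp₂) sin θ + (mp₁+np₂) cos θ. -/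
open Real

private lemma aux_deriv23 (x C A : ℝ → ℝ) (t₀ : ℝ)
    (hC : ContDiff ℝ (⊤ : ℕ∞) C) (hA : ContDiff ℝ (⊤ : ℕ∞) A)
    (hode : ∀ t, deriv x t = C t * A t) (hA0 : A t₀ = 0) :
    iteratedDeriv 2 x t₀ = C t₀ * deriv A t₀ ∧
    iteratedDeriv 3 x t₀ = 2 * (deriv C t₀ * deriv A t₀) + C t₀ * deriv (deriv A) t₀ := by
  have hdC : Differentiable ℝ C := hC.differentiable (by simp)
  have hdA : Differentiable ℝ A := hA.differentiable (by simp)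
  have hdC' : Differentiable ℝ (deriv C) :=
    ((contDiff_infty_iff_deriv.mp (hC.of_le (by simp))).2).differentiable (by simp)
  have hdA' : Differentiable ℝ (deriv A) :=
    ((contDiff_infty_iff_deriv.mp (hA.of_le (by simp))).2).differentiable (by simp)
  have hd1 : deriv x = fun t => C t * A t := funext hode
  have h2 : deriv (deriv x) = fun t => deriv C t * A t + C t * deriv A t := by
    rw [hd1]; funext t; exact deriv_mul (hdC t) (hdA t)
  have e2 : iteratedDeriv 2 x t₀ = deriv (deriv x) t₀ := by
    rw [show (2:ℕ) = 1 + 1 from rfl, iteratedDeriv_succ, iteratedDeriv_one]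
  have e3 : iteratedDeriv 3 x t₀ = deriv (deriv (deriv x)) t₀ := by
    rw [show (3:ℕ) = 2 + 1 from rfl, iteratedDeriv_succ,
      show (2:ℕ) = 1 + 1 from rfl, iteratedDeriv_succ, iteratedDeriv_one]
  constructor
  · rw [e2, h2]; simp [hA0]
  · rw [e3, h2]
    rw [deriv_fun_add (f := fun t => deriv C t * A t) (g := fun t => C t * deriv A t) ((hdC' t₀).mul (hdA t₀)) ((hdC t₀).mul (hdA' t₀)),
        deriv_fun_mul (hdC' t₀) (hdA t₀), deriv_fun_mul (hdC t₀) (hdA' t₀), hA0]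
    ring

/-- General-surface cusp determinant computation: with
`A = (kp₁ + ℓp₂) cos θ + (mp₁ + np₂) sin θ`,
`B = −(kp₁ + ℓp₂) sin θ + (mp₁ + np₂) cos θ` along a curve,
`x₁' = (k cos θ + m sin θ)·A`, `x₂' = (ℓ cos θ + n sin θ)·A`, and the vanishing
at `t₀` of `A`, of the derivatives of `k, ℓ, m, n`, and of `p₁', p₂'`, the
determinant `Δ = x₁''x₂''' − x₂''x₁'''` at `t₀` equals
`2·B(t₀)²·(kn − ℓm)(t₀)·θ'(t₀)³`. -/
theorem general_cusp_det (k ℓ m n p₁ p₂ θ x₁ x₂ A B : ℝ → ℝ) (t₀ : ℝ)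
    (hk : ContDiff ℝ (⊤ : ℕ∞) k) (hl : ContDiff ℝ (⊤ : ℕ∞) ℓ) (hm : ContDiff ℝ (⊤ : ℕ∞) m)
    (hn : ContDiff ℝ (⊤ : ℕ∞) n) (hp₁ : ContDiff ℝ (⊤ : ℕ∞) p₁) (hp₂ : ContDiff ℝ (⊤ : ℕ∞) p₂)
    (hθ : ContDiff ℝ (⊤ : ℕ∞) θ) (hx₁ : ContDiff ℝ (⊤ : ℕ∞) x₁) (hx₂ : ContDiff ℝ (⊤ : ℕ∞) x₂)
    (hA : ∀ t, A t = (k t * p₁ t + ℓ t * p₂ t) * Real.cos (θ t)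
                   + (m t * p₁ t + n t * p₂ t) * Real.sin (θ t))
    (hB : ∀ t, B t = -(k t * p₁ t + ℓ t * p₂ t) * Real.sin (θ t)
                   + (m t * p₁ t + n t * p₂ t) * Real.cos (θ t))
    (hode₁ : ∀ t, deriv x₁ t =
      (k t * Real.cos (θ t) + m t * Real.sin (θ t)) * A t)
    (hode₂ : ∀ t, deriv x₂ t =
      (ℓ t * Real.cos (θ t) + n t * Real.sin (θ t)) * A t)
    (hA0 : A t₀ = 0)
    (hk' : deriv k t₀ = 0) (hl' : deriv ℓ t₀ = 0)
    (hm' : deriv m t₀ = 0) (hn' : deriv n t₀ = 0)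
    (hp₁' : deriv p₁ t₀ = 0) (hp₂' : deriv p₂ t₀ = 0) :
    iteratedDeriv 2 x₁ t₀ * iteratedDeriv 3 x₂ t₀
      - iteratedDeriv 2 x₂ t₀ * iteratedDeriv 3 x₁ t₀
      = 2 * (B t₀) ^ 2 * (k t₀ * n t₀ - ℓ t₀ * m t₀) * (deriv θ t₀) ^ 3 := by
  have hcs : ContDiff ℝ (⊤ : ℕ∞) (fun t => Real.cos (θ t)) := Real.contDiff_cos.comp hθ
  have hsn : ContDiff ℝ (⊤ : ℕ∞) (fun t => Real.sin (θ t)) := Real.contDiff_sin.comp hθ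
  have hAfun : A = fun t => (k t * p₁ t + ℓ t * p₂ t) * Real.cos (θ t)
      + (m t * p₁ t + n t * p₂ t) * Real.sin (θ t) := funext hA
  have hAsm : ContDiff ℝ (⊤ : ℕ∞) A := by
    rw [hAfun]
    exact (((hk.mul hp₁).add (hl.mul hp₂)).mul hcs).add
      (((hm.mul hp₁).add (hn.mul hp₂)).mul hsn)
  have hC₁sm : ContDiff ℝ (⊤ : ℕ∞) (fun t => k t * Real.cos (θ t) + m t * Real.sin (θ t)) :=
    (hk.mul hcs).add (hm.mul hsn)
  have hC₂sm : ContDiff ℝ (⊤ : ℕ∞) (fun t => ℓ t * Real.cos (θ t) + n t * Real.sin (θ t)) :=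
    (hl.mul hcs).add (hn.mul hsn)
  obtain ⟨e21, e31⟩ := aux_deriv23 x₁ _ A t₀ hC₁sm hAsm hode₁ hA0
  obtain ⟨e22, e32⟩ := aux_deriv23 x₂ _ A t₀ hC₂sm hAsm hode₂ hA0
  have Hθ : HasDerivAt θ (deriv θ t₀) t₀ := (hθ.differentiable (by simp) t₀).hasDerivAt
  have Hc : HasDerivAt (fun t => Real.cos (θ t)) (-Real.sin (θ t₀) * deriv θ t₀) t₀ :=
    (Real.hasDerivAt_cos (θ t₀)).comp t₀ Hθ
  have Hs : HasDerivAt (fun t => Real.sin (θ t)) (Real.cos (θ t₀) * deriv θ t₀) t₀ :=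
    (Real.hasDerivAt_sin (θ t₀)).comp t₀ Hθ
  have Hk : HasDerivAt k 0 t₀ := hk' ▸ (hk.differentiable (by simp) t₀).hasDerivAt
  have Hl : HasDerivAt ℓ 0 t₀ := hl' ▸ (hl.differentiable (by simp) t₀).hasDerivAt
  have Hm : HasDerivAt m 0 t₀ := hm' ▸ (hm.differentiable (by simp) t₀).hasDerivAt
  have Hn : HasDerivAt n 0 t₀ := hn' ▸ (hn.differentiable (by simp) t₀).hasDerivAt
  have Hp1 : HasDerivAt p₁ 0 t₀ := hp₁' ▸ (hp₁.differentiable (by simp) t₀).hasDerivAt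
  have Hp2 : HasDerivAt p₂ 0 t₀ := hp₂' ▸ (hp₂.differentiable (by simp) t₀).hasDerivAt
  have HA : HasDerivAt A (B t₀ * deriv θ t₀) t₀ := by
    rw [hAfun]
    have h := (((Hk.mul Hp1).add (Hl.mul Hp2)).mul Hc).add
      (((Hm.mul Hp1).add (Hn.mul Hp2)).mul Hs)
    refine h.congr_deriv ?_
    simp only [Pi.add_apply, Pi.mul_apply]
    rw [hB]; ring
  have HC₁ : HasDerivAt (fun t => k t * Real.cos (θ t) + m t * Real.sin (θ t))
      ((-(k t₀) * Real.sin (θ t₀) + m t₀ * Real.cos (θ t₀)) * deriv θ t₀) t₀ := by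
    have h := (Hk.mul Hc).add (Hm.mul Hs)
    refine h.congr_deriv ?_; ring
  have HC₂ : HasDerivAt (fun t => ℓ t * Real.cos (θ t) + n t * Real.sin (θ t))
      ((-(ℓ t₀) * Real.sin (θ t₀) + n t₀ * Real.cos (θ t₀)) * deriv θ t₀) t₀ := by
    have h := (Hl.mul Hc).add (Hn.mul Hs)
    refine h.congr_deriv ?_; ring
  rw [e21, e22, e31, e32]
  simp only [HA.deriv, HC₁.deriv, HC₂.deriv, hB]
  linear_combination (2 * (-(k t₀ * p₁ t₀ + ℓ t₀ * p₂ t₀) * Real.sin (θ t₀)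
      + (m t₀ * p₁ t₀ + n t₀ * p₂ t₀) * Real.cos (θ t₀))^2
      * (k t₀ * n t₀ - ℓ t₀ * m t₀) * (deriv θ t₀)^3) * Real.sin_sq_add_cos_sq (θ t₀)
end
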